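/- arXiv:2008.01379 — 9 statements merged into one kernel-verified Lean document; each statement's English description precedes it below -/
import Mathlib

section
/- Let Γ be a group and S a Γ-graded semigroup. Then there exists a Γ-graded pointed set X and an injective semigroup homomorphism ψ : S → T^gr(X) which is graded, i.e. ψ(S_α) ⊆ T(X)_α for every α ∈ Γ. (Concretely one may take X = S ∪ {1} with the induced grading and ψ(s) the left translation by s.) -/
/-!
Take `X = S ∪ {1}`, pointed at `0 ∈ S`, with `1` placed in degree `1`, and let `s` act by left
multiplication. Associativity makes this an action, evaluating at `1` recovers `s`, and the
multiplicativity of the degree on nonzero products is exactly the statement that `s ∈ S_α`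
maps `X_β` into `X_{αβ}`.
-/

/-- A `Γ`-grading on a semigroup with zero `S`: a degree map (here implemented as a total
map, whose value on `0` is irrelevant since the components below always contain `0`),
multiplicative on nonzero products. -/
structure Grading (Γ : Type*) [Group Γ] (S : Type*) [SemigroupWithZero S] where
  deg : S → Γ
  deg_mul : ∀ s t : S, s * t ≠ 0 → deg (s * t) = deg s * deg t

namespace Grading

variable {Γ : Type*} [Group Γ] {S : Type*} [SemigroupWithZero S]

/-- The component `S_α = φ⁻¹(α) ∪ {0}` of a `Γ`-graded semigroup. -/
def comp (g : Grading Γ S) (α : Γ) : Set S := {s | s = 0 ∨ g.deg s = α}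

end Grading

namespace Grading

variable {Γ : Type*} [Group Γ] {S : Type*} [SemigroupWithZero S] (g : Grading Γ S)

@[simp]
theorem mem_comp_iff {α : Γ} {s : S} : s ∈ g.comp α ↔ s = 0 ∨ g.deg s = α :=
  Iff.rfl

theorem mul_mem_comp {α β : Γ} {s t : S} (hs : s ∈ g.comp α) (ht : t ∈ g.comp β) :
    s * t ∈ g.comp (α * β) := by
  by_cases hst : s * t = 0
  · exact Or.inl hst
  obtain hs | hs := hs
  · simp [hs] at hst
  obtain ht | ht := ht
  · simp [ht] at hst
  exact Or.inr (by rw [g.deg_mul s t hst, hs, ht])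

def degWithOne : WithOne S → Γ :=
  WithOne.recOneCoe 1 g.deg

def compWithOne (β : Γ) : Set (WithOne S) :=
  {x | x = ((0 : S) : WithOne S) ∨ g.degWithOne x = β}

theorem coe_mul_mem_compWithOne {α β : Γ} {s : S} (hs : s ∈ g.comp α) {x : WithOne S}
    (hx : x ∈ g.compWithOne β) : (s : WithOne S) * x ∈ g.compWithOne (α * β) := by
  induction x using WithOne.recOneCoe with
  | one =>
    obtain hx | hx := hx
    · exact absurd hx WithOne.one_ne_coe
    obtain rfl : 1 = β := hx
    simpa [compWithOne, degWithOne] using hs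
  | coe t =>
    have ht : t ∈ g.comp β := by simpa [compWithOne, degWithOne] using hx
    simpa [compWithOne, degWithOne, ← WithOne.coe_mul] using g.mul_mem_comp hs ht

end Grading

/-- **Graded representation theorem** (Proposition `gradedrepresentationthrm`):
every `Γ`-graded semigroup `S` admits a graded injective homomorphism into the graded
transformation semigroup `𝒯^gr(X)` of some `Γ`-graded pointed set `X`.  Here the target
is described concretely: `ψ s` is a pointed self-map of `X` (i.e. an element of
`𝒯'(X)`), `ψ` is an injective semigroup homomorphism, and for every `α ∈ Γ` and
`s ∈ S_α` the map `ψ s` sends `X_β` into `X_{αβ}` for every `β`, i.e.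
`ψ(S_α) ⊆ 𝒯(X)_α`. -/
theorem graded_representation {Γ : Type u} [Group Γ] {S : Type v} [SemigroupWithZero S]
    (g : Grading Γ S) :
    ∃ (X : Type v) (zX : X) (degX : X → Γ) (ψ : S → X → X),
      Function.Injective ψ ∧
      (∀ s t : S, ψ (s * t) = ψ s ∘ ψ t) ∧
      (∀ s : S, ψ s zX = zX) ∧
      (∀ (α : Γ) (s : S), s ∈ g.comp α → ∀ (β : Γ) (x : X),
        (x = zX ∨ degX x = β) → (ψ s x = zX ∨ degX (ψ s x) = α * β)) := by
  refine ⟨WithOne S, ((0 : S) : WithOne S), g.degWithOne, fun s x => s * x, ?_, ?_, ?_, ?_⟩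
  · intro s t hst
    simpa using congrFun hst 1
  · intro s t
    funext x
    simp [mul_assoc]
  · intro s
    simp [← WithOne.coe_mul]
  · intro α s hs β x hx
    exact g.coe_mul_mem_compWithOne hs hx
end

section
/- Let S be a Γ-graded inverse semigroup. Then S is 0-E-unitary if and only if the inverse semigroup S_ε is 0-E-unitary. -/
namespace Grading

variable {Γ : Type*} [Group Γ] {S : Type*} [SemigroupWithZero S] (g : Grading Γ S)

theorem deg_eq_one_of_isIdempotentElem {e : S} (he : IsIdempotentElem e) (he0 : e ≠ 0) :
    g.deg e = 1 := by
  have hdeg : g.deg e * g.deg e = g.deg e * 1 := by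
    rw [mul_one, ← g.deg_mul e e (he.eq.symm ▸ he0), he.eq]
  exact mul_left_cancel hdeg

theorem deg_mul_of_isIdempotentElem {s e : S} (he : IsIdempotentElem e) (hse : s * e ≠ 0) :
    g.deg (s * e) = g.deg s := by
  have he0 : e ≠ 0 := by
    rintro rfl
    exact hse (mul_zero s)
  rw [g.deg_mul s e hse, g.deg_eq_one_of_isIdempotentElem he he0, mul_one]

theorem mem_comp_one_of_idempotent_le {s u : S} (hu : IsIdempotentElem u) (hu0 : u ≠ 0)
    (hle : ∃ e : S, IsIdempotentElem e ∧ u = s * e) : s ∈ g.comp 1 := by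
  obtain ⟨e, he, rfl⟩ := hle
  exact Or.inr (g.deg_mul_of_isIdempotentElem he hu0 ▸ g.deg_eq_one_of_isIdempotentElem hu hu0)

end Grading

theorem zeroEUnitary_iff_component_general {Γ : Type u} [Group Γ] {S : Type v}
    [SemigroupWithZero S] (g : Grading Γ S) :
    (∀ s u : S, u * u = u → u ≠ 0 → (∃ e : S, e * e = e ∧ u = s * e) → s * s = s) ↔
      (∀ s ∈ g.comp 1, ∀ u : S, u * u = u → u ≠ 0 →
        (∃ e : S, e * e = e ∧ u = s * e) → s * s = s) :=
  ⟨fun h s _ => h s,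
    fun h s u hu hu0 hle => h s (g.mem_comp_one_of_idempotent_le hu hu0 hle) u hu hu0 hle⟩

/-- A `Γ`-graded inverse semigroup `S` is `0`-`E`-unitary if and only if the inverse
semigroup `S_ε` is `0`-`E`-unitary.  Here `u ≤ s` in the natural partial order is
expressed as `∃ e, e * e = e ∧ u = s * e`, idempotents are the `u` with `u * u = u`,
and `0`-`E`-unitarity of `S_ε` is expressed for elements of the component `S_ε = comp 1`
(note that all idempotents of `S` lie in `S_ε`, so `E(S_ε) = E(S)`). -/
theorem zeroEUnitary_iff_component {Γ : Type u} [Group Γ] {S : Type v}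
    [SemigroupWithZero S] (g : Grading Γ S)
    (hinv : ∀ s : S, ∃! t : S, s * t * s = s ∧ t * s * t = t) :
    (∀ s u : S, u * u = u → u ≠ 0 → (∃ e : S, e * e = e ∧ u = s * e) → s * s = s) ↔
      (∀ s ∈ g.comp 1, ∀ u : S, u * u = u → u ≠ 0 →
        (∃ e : S, e * e = e ∧ u = s * e) → s * s = s) :=
  zeroEUnitary_iff_component_general g
end

section
/- Let S be a strongly Γ-graded semigroup with local units. Then: (1) S is a regular semigroup if and only if S_ε is a regular semigroup; (2) S is an inverse semigroup if and only if S_ε is an inverse semigroup. -/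
open Pointwise

namespace Grading

variable {Γ : Type*} [Group Γ] {S : Type*} [SemigroupWithZero S]

/-- `S` is strongly graded if `S_α S_β = S_{αβ}` for all `α, β ∈ Γ`. -/
def IsStrong (g : Grading Γ S) : Prop :=
  ∀ α β : Γ, g.comp α * g.comp β = g.comp (α * β)

end Grading

/-- `S` has local units. -/
def HasLocalUnits (S : Type*) [SemigroupWithZero S] : Prop :=
  ∀ s : S, ∃ u v : S, u * u = u ∧ v * v = v ∧ u * s = s ∧ s * v = s

/-!
All idempotents of `S` lie in `S_ε`, and an inverse of an element of `S_α` lies in `S_{α⁻¹}`;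
this gives the easy directions. Conversely, let `s ∈ S_α` with right local unit `v`. Then
`v ∈ S_ε = S_{α⁻¹} S_α`, say `v = x y`, and `s x ∈ S_ε`; an inner inverse `w` of `s x` gives
`s (x w) s = (s x w s x) y = s x y = s`. Finally, a regular semigroup whose idempotents commute is
an inverse semigroup, and the idempotents of `S` commute because they lie in the inverse
semigroup `S_ε`.
-/

section Semigroup

variable {S : Type*} [Semigroup S]

def IsInverse (s t : S) : Prop := s * t * s = s ∧ t * s * t = t

lemma IsInverse.symm {s t : S} (h : IsInverse s t) : IsInverse t s := ⟨h.2, h.1⟩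

lemma IsInverse.isIdempotentElem_mul {s t : S} (h : IsInverse s t) :
    IsIdempotentElem (s * t) := by
  rw [IsIdempotentElem, ← mul_assoc, h.1]

lemma IsIdempotentElem.isInverse_self {e : S} (he : IsIdempotentElem e) : IsInverse e e := by
  simp only [IsInverse, he.eq, and_self]

lemma isInverse_mul_mul {s t : S} (h : s * t * s = s) : IsInverse s (t * s * t) := by
  have h' : ∀ z, s * (t * (s * z)) = s * z := fun z => by rw [← mul_assoc, ← mul_assoc, h]
  simp only [mul_assoc] at h h'
  constructor <;> simp only [mul_assoc, h, h']

lemma IsInverse.eq_of_commute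
    (hcomm : ∀ e f : S, IsIdempotentElem e → IsIdempotentElem f → Commute e f)
    {s t t' : S} (h : IsInverse s t) (h' : IsInverse s t') : t = t' := by
  have hst : Commute (s * t') (s * t) := hcomm _ _ h'.isIdempotentElem_mul h.isIdempotentElem_mul
  have hts : Commute (t * s) (t' * s) :=
    hcomm _ _ h.symm.isIdempotentElem_mul h'.symm.isIdempotentElem_mul
  calc t = t * (s * t' * s) * t := by rw [h'.1, h.2]
    _ = t * ((s * t) * (s * t')) := by rw [← hst.eq]; simp only [mul_assoc]
    _ = t * s * t' := by simp only [← mul_assoc]; rw [h.2]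
    _ = (t * s) * (t' * s) * t' := by rw [mul_assoc (t * s), h'.2]
    _ = t' * (s * t * s) * t' := by rw [hts.eq]; simp only [mul_assoc]
    _ = t' := by rw [h.1, h'.2]

theorem existsUnique_isInverse_of_commute (hreg : ∀ s : S, ∃ t, s * t * s = s)
    (hcomm : ∀ e f : S, IsIdempotentElem e → IsIdempotentElem f → Commute e f) (s : S) :
    ∃! t, IsInverse s t :=
  let ⟨t, ht⟩ := hreg s
  ⟨t * s * t, isInverse_mul_mul ht, fun _ h => h.eq_of_commute hcomm (isInverse_mul_mul ht)⟩

namespace Subsemigroup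

def HasUniqueInverses (T : Subsemigroup S) : Prop :=
  ∀ s ∈ T, ∃! t, t ∈ T ∧ IsInverse s t

variable {T : Subsemigroup S}

lemma HasUniqueInverses.eq {s t t' : S} (hT : T.HasUniqueInverses) (hs : s ∈ T)
    (ht : t ∈ T) (ht' : t' ∈ T) (h : IsInverse s t) (h' : IsInverse s t') : t = t' :=
  (hT s hs).unique ⟨ht, h⟩ ⟨ht', h'⟩

/-- If `x` is the inverse of `a b`, then `a b` is an inverse of the
idempotent `b x a`, hence equal to it. -/
lemma HasUniqueInverses.isIdempotentElem_mul (hT : T.HasUniqueInverses) {a b : S}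
    (ha : a ∈ T) (hb : b ∈ T) (ha' : IsIdempotentElem a) (hb' : IsIdempotentElem b) :
    IsIdempotentElem (a * b) := by
  obtain ⟨x, ⟨hx, hab, hxab⟩, -⟩ := hT (a * b) (T.mul_mem ha hb)
  have hbxa : b * x * a ∈ T := T.mul_mem (T.mul_mem hb hx) ha
  have hxab' : ∀ z, x * (a * (b * (x * z))) = x * z := fun z => by
    simpa only [mul_assoc] using congrArg (· * z) hxab
  simp only [mul_assoc] at hab
  have hidem : IsIdempotentElem (b * x * a) := by
    simp only [IsIdempotentElem, mul_assoc, hxab']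
  have hinv : IsInverse (b * x * a) (a * b) := by
    constructor <;> simp only [mul_assoc, ha'.mul_self_mul, hb'.mul_self_mul, hab, hxab']
  rw [hT.eq hbxa (T.mul_mem ha hb) hbxa hinv hidem.isInverse_self]
  exact hidem

lemma HasUniqueInverses.commute (hT : T.HasUniqueInverses) {e f : S}
    (he : e ∈ T) (hf : f ∈ T) (he' : IsIdempotentElem e) (hf' : IsIdempotentElem f) :
    Commute e f := by
  have hef := hT.isIdempotentElem_mul he hf he' hf'
  have hfe := hT.isIdempotentElem_mul hf he hf' he'
  have hinv : IsInverse (e * f) (f * e) := by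
    constructor
    · rw [mul_assoc e f, ← mul_assoc f f, hf'.eq, ← mul_assoc, ← mul_assoc, he'.mul_mul_self,
        mul_assoc, hef.eq]
    · rw [mul_assoc f e, ← mul_assoc e e, he'.eq, ← mul_assoc, ← mul_assoc, hf'.mul_mul_self,
        mul_assoc, hfe.eq]
  exact hT.eq (T.mul_mem he hf) (T.mul_mem he hf) (T.mul_mem hf he) hef.isInverse_self hinv

end Subsemigroup

end Semigroup

namespace Grading

variable {Γ : Type*} [Group Γ] {S : Type*} [SemigroupWithZero S] (g : Grading Γ S)

lemma mem_comp_deg (s : S) : s ∈ g.comp (g.deg s) := Or.inr rfl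

lemma mul_mem_comp_s4 {α β : Γ} {a b : S} (ha : a ∈ g.comp α) (hb : b ∈ g.comp β) :
    a * b ∈ g.comp (α * β) := by
  rcases ha with rfl | rfl
  · exact Or.inl (zero_mul b)
  rcases hb with rfl | rfl
  · exact Or.inl (mul_zero a)
  by_cases hab : a * b = 0
  · exact Or.inl hab
  · exact Or.inr (g.deg_mul a b hab)

def compOne : Subsemigroup S where
  carrier := g.comp 1
  mul_mem' ha hb := by simpa using g.mul_mem_comp_s4 ha hb

lemma mem_comp_one_of_isIdempotentElem {e : S} (he : IsIdempotentElem e) : e ∈ g.comp 1 := by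
  by_cases he0 : e = 0
  · exact Or.inl he0
  · have hdeg := g.deg_mul e e (by rwa [he.eq])
    rw [he.eq] at hdeg
    exact Or.inr (mul_eq_left.mp hdeg.symm)

lemma mem_comp_inv_of_isInverse {α : Γ} {s t : S} (hs : s ∈ g.comp α) (h : IsInverse s t) :
    t ∈ g.comp α⁻¹ := by
  by_cases ht : t = 0
  · exact Or.inl ht
  have hs0 : s ≠ 0 := fun hs0 => ht (by rw [← h.2, hs0, mul_zero, zero_mul])
  have hst : s * t ≠ 0 := fun hst => hs0 (by rw [← h.1, hst, zero_mul])
  have hdeg : α * g.deg t * α = α := by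
    rw [← hs.resolve_left hs0, ← g.deg_mul s t hst, ← g.deg_mul _ s (by rwa [h.1]), h.1]
  exact Or.inr (eq_inv_of_mul_eq_one_right (mul_eq_right.mp hdeg))

variable {g}

theorem IsStrong.exists_mul_mul_eq_self (hstr : g.IsStrong) (hlu : HasLocalUnits S)
    (h1 : ∀ s ∈ g.comp 1, ∃ t, s * t * s = s) (s : S) : ∃ t, s * t * s = s := by
  obtain ⟨-, v, -, hv, -, hsv⟩ := hlu s
  have hv1 : v ∈ g.comp ((g.deg s)⁻¹ * g.deg s) := by
    rw [inv_mul_cancel]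
    exact g.mem_comp_one_of_isIdempotentElem hv
  rw [← hstr] at hv1
  obtain ⟨x, hx, y, -, rfl⟩ := hv1
  obtain ⟨w, hw⟩ := h1 (s * x) (by simpa using g.mul_mem_comp_s4 (g.mem_comp_deg s) hx)
  refine ⟨x * w, ?_⟩
  calc s * (x * w) * s = s * (x * w) * (s * (x * y)) := by rw [hsv]
    _ = s * x * w * (s * x) * y := by simp only [mul_assoc]
    _ = s := by rw [hw, mul_assoc, hsv]

end Grading

/-- For a strongly `Γ`-graded semigroup `S` with local units:
(1) `S` is regular iff `S_ε` is regular;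
(2) `S` is an inverse semigroup iff `S_ε` is an inverse semigroup
(where inner inverses of elements of `S_ε` are required to lie in, and be unique in,
`S_ε = comp 1`). -/
theorem strongly_graded_regular_and_inverse {Γ : Type u} [Group Γ] {S : Type v}
    [SemigroupWithZero S] (g : Grading Γ S) (hstr : g.IsStrong)
    (hlu : HasLocalUnits S) :
    ((∀ s : S, ∃ t : S, s * t * s = s) ↔
      (∀ s ∈ g.comp 1, ∃ t ∈ g.comp 1, s * t * s = s)) ∧
    ((∀ s : S, ∃! t : S, s * t * s = s ∧ t * s * t = t) ↔
      (∀ s ∈ g.comp 1, ∃! t : S, t ∈ g.comp 1 ∧ s * t * s = s ∧ t * s * t = t)) := by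
  refine ⟨⟨fun hreg s hs => ?_, fun h1 => ?_⟩, ⟨fun hinv s hs => ?_, fun h1 => ?_⟩⟩
  · obtain ⟨t, ht⟩ := hreg s
    exact ⟨t * s * t, by simpa using g.mem_comp_inv_of_isInverse hs (isInverse_mul_mul ht),
      (isInverse_mul_mul ht).1⟩
  · exact hstr.exists_mul_mul_eq_self hlu fun s hs => (h1 s hs).imp fun _ => And.right
  · obtain ⟨t, ht, hunique⟩ := hinv s
    exact ⟨t, ⟨by simpa using g.mem_comp_inv_of_isInverse hs ht, ht⟩,
      fun t' ht' => hunique t' ht'.2⟩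
  · have hS_eps : g.compOne.HasUniqueInverses := h1
    refine existsUnique_isInverse_of_commute
      (hstr.exists_mul_mul_eq_self hlu fun s hs => ?_) (fun e f he hf => ?_)
    · obtain ⟨t, ⟨-, ht, -⟩, -⟩ := h1 s hs
      exact ⟨t, ht⟩
    · exact hS_eps.commute (g.mem_comp_one_of_isIdempotentElem he)
        (g.mem_comp_one_of_isIdempotentElem hf) he hf
end

section
/- Let S be a Γ-graded semigroup with local units. Then the following are equivalent: (1) S is strongly graded; (2) S_α X_β = X_{αβ} for all α, β ∈ Γ and every unital Γ-graded left S-set X; (3) S X_α = X for all α ∈ Γ and every unital Γ-graded left S-set X. -/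
open Pointwise

/-- A `Γ`-graded pointed left `S`-set: a pointed set `X` with an `S`-action and a degree
map (total here, with irrelevant value at `0`) satisfying `deg(sx) = deg(s)deg(x)`
whenever `sx ≠ 0`. -/
structure GradedAct {Γ : Type u} [Group Γ] {S : Type w} [SemigroupWithZero S]
    (g : Grading Γ S) (X : Type v) [Zero X] where
  act : S → X → X
  act_mul : ∀ (s t : S) (x : X), act s (act t x) = act (s * t) x
  act_zero : ∀ x : X, act 0 x = 0
  degX : X → Γ
  deg_act : ∀ (s : S) (x : X), act s x ≠ 0 → degX (act s x) = g.deg s * degX x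

/-- The component `X_α` of a `Γ`-graded left `S`-set. -/
def GradedAct.comp {Γ : Type u} [Group Γ] {S : Type w} [SemigroupWithZero S]
    {g : Grading Γ S} {X : Type v} [Zero X] (A : GradedAct g X) (α : Γ) : Set X :=
  {x | x = 0 ∨ A.degX x = α}

/-!
If `S` is strongly graded and `x ∈ X_{αβ}` is nonzero, a local unit `u` with `u x = x` has
degree `1`, so `u ∈ S_α S_{α⁻¹}`; writing `u = a b` gives `x = a (b x)` with `b x ∈ X_β`.
Conversely, condition (3) for `S` acting on itself by left multiplication writes each nonzero
`s ∈ S_{αβ}` as `a b` with `b ∈ S_β`, which forces `a ∈ S_α`.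
-/

namespace Grading

variable {Γ : Type*} [Group Γ] {S : Type*} [SemigroupWithZero S] (g : Grading Γ S)

theorem deg_eq_one_of_mul_self {u : S} (hu : u * u = u) (hu0 : u ≠ 0) : g.deg u = 1 := by
  have h := g.deg_mul u u (by rwa [hu])
  rw [hu] at h
  exact mul_eq_left.mp h.symm

end Grading

namespace GradedAct

variable {Γ : Type u} [Group Γ] {S : Type w} [SemigroupWithZero S] {g : Grading Γ S}
  {X : Type v} [Zero X] (A : GradedAct g X)

def IsUnital : Prop := ∀ x : X, ∃ (s : S) (y : X), A.act s y = x

theorem act_zero_right (s : S) : A.act s 0 = 0 := by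
  rw [← A.act_zero 0, A.act_mul, mul_zero]

theorem image2_comp_subset (α β : Γ) :
    Set.image2 A.act (g.comp α) (A.comp β) ⊆ A.comp (α * β) := by
  rintro _ ⟨s, rfl | hs, y, rfl | hy, rfl⟩
  · exact Or.inl (A.act_zero 0)
  · exact Or.inl (A.act_zero y)
  · exact Or.inl (A.act_zero_right s)
  · by_cases h0 : A.act s y = 0
    · exact Or.inl h0
    · exact Or.inr (by rw [A.deg_act s y h0, hs, hy])

theorem exists_idempotent_act_eq_self (hlu : HasLocalUnits S) (hA : A.IsUnital) (x : X) :
    ∃ u : S, u * u = u ∧ A.act u x = x := by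
  obtain ⟨s, y, rfl⟩ := hA x
  obtain ⟨u, -, hu, -, hus, -⟩ := hlu s
  exact ⟨u, hu, by rw [A.act_mul, hus]⟩

theorem comp_subset_image2_comp (hg : g.IsStrong) (hlu : HasLocalUnits S) (hA : A.IsUnital)
    (α β : Γ) : A.comp (α * β) ⊆ Set.image2 A.act (g.comp α) (A.comp β) := by
  intro x hx
  by_cases hx0 : x = 0
  · subst hx0
    exact ⟨0, Or.inl rfl, 0, Or.inl rfl, A.act_zero 0⟩
  replace hx := hx.resolve_left hx0
  obtain ⟨u, hu, hux⟩ := A.exists_idempotent_act_eq_self hlu hA x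
  have hu0 : u ≠ 0 := by
    rintro rfl
    exact hx0 (hux ▸ A.act_zero x)
  have hu_mem : u ∈ g.comp α * g.comp α⁻¹ := by
    rw [hg, mul_inv_cancel]
    exact Or.inr (g.deg_eq_one_of_mul_self hu hu0)
  obtain ⟨a, ha, b, hb, hab : a * b = u⟩ := hu_mem
  have habx : A.act a (A.act b x) = x := by rw [A.act_mul, hab, hux]
  refine ⟨a, ha, A.act b x, ?_, habx⟩
  by_cases hbx : A.act b x = 0
  · exact Or.inl hbx
  have hb0 : b ≠ 0 := by
    rintro rfl
    exact hbx (A.act_zero x)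
  right
  rw [A.deg_act b x hbx, hb.resolve_left hb0, hx, inv_mul_cancel_left]

theorem image2_comp_eq_of_isStrong (hg : g.IsStrong) (hlu : HasLocalUnits S)
    (hA : A.IsUnital) (α β : Γ) :
    Set.image2 A.act (g.comp α) (A.comp β) = A.comp (α * β) :=
  (A.image2_comp_subset α β).antisymm (A.comp_subset_image2_comp hg hlu hA α β)

theorem image2_univ_comp_eq_univ
    (h : ∀ α β : Γ, Set.image2 A.act (g.comp α) (A.comp β) = A.comp (α * β)) (α : Γ) :
    Set.image2 A.act Set.univ (A.comp α) = Set.univ := by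
  refine Set.eq_univ_of_forall fun x => ?_
  have hx : x ∈ A.comp (A.degX x * α⁻¹ * α) := Or.inr (inv_mul_cancel_right _ _).symm
  rw [← h] at hx
  exact Set.image2_subset_right (Set.subset_univ _) hx

end GradedAct

section Regular

variable {Γ : Type*} [Group Γ] {S : Type*} [SemigroupWithZero S] (g : Grading Γ S)

def GradedAct.regular : GradedAct g S where
  act := (· * ·)
  act_mul s t x := (mul_assoc s t x).symm
  act_zero := zero_mul
  degX := g.deg
  deg_act := g.deg_mul

theorem GradedAct.regular_isUnital (hlu : HasLocalUnits S) : (GradedAct.regular g).IsUnital :=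
  fun s =>
  let ⟨u, _, _, _, hus, _⟩ := hlu s
  ⟨u, s, hus⟩

theorem Grading.isStrong_of_univ_mul_comp
    (h : ∀ β : Γ, (Set.univ : Set S) * g.comp β = Set.univ) : g.IsStrong := by
  intro α β
  refine Set.Subset.antisymm ((GradedAct.regular g).image2_comp_subset α β) ?_
  intro s (hs : s = 0 ∨ g.deg s = α * β)
  by_cases hs0 : s = 0
  · subst hs0
    exact ⟨0, Or.inl rfl, 0, Or.inl rfl, zero_mul 0⟩
  replace hs := hs.resolve_left hs0
  obtain ⟨a, -, b, hb, hab : a * b = s⟩ : s ∈ (Set.univ : Set S) * g.comp β := by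
    rw [h]
    trivial
  have hb0 : b ≠ 0 := by
    rintro rfl
    exact hs0 (by rw [← hab, mul_zero])
  have hdeg := g.deg_mul a b (by rwa [hab])
  rw [hab, hs, hb.resolve_left hb0, mul_left_inj] at hdeg
  exact ⟨a, Or.inr hdeg.symm, b, hb, hab⟩

end Regular

/-- Lemma `strongly-gr-lemma`: for a `Γ`-graded semigroup `S` with local units, the
following are equivalent: (1) `S` is strongly graded; (2) `S_α X_β = X_{αβ}` for all
`α, β` and all unital `Γ`-graded left `S`-sets `X`; (3) `S X_α = X` for all `α` and all
unital `Γ`-graded left `S`-sets `X`. -/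
theorem strongly_graded_iff_graded_acts {Γ : Type u} [Group Γ] {S : Type v}
    [SemigroupWithZero S] (g : Grading Γ S) (hlu : HasLocalUnits S) :
    (g.IsStrong ↔
      ∀ (X : Type v) (_inst : Zero X) (A : GradedAct g X),
        (∀ x : X, ∃ (s : S) (y : X), A.act s y = x) →
        ∀ α β : Γ, Set.image2 A.act (g.comp α) (A.comp β) = A.comp (α * β)) ∧
    (g.IsStrong ↔
      ∀ (X : Type v) (_inst : Zero X) (A : GradedAct g X),
        (∀ x : X, ∃ (s : S) (y : X), A.act s y = x) →
        ∀ α : Γ, Set.image2 A.act Set.univ (A.comp α) = Set.univ) := by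
  have htfae : List.TFAE [g.IsStrong,
      ∀ (X : Type v) (_ : Zero X) (A : GradedAct g X), A.IsUnital →
        ∀ α β : Γ, Set.image2 A.act (g.comp α) (A.comp β) = A.comp (α * β),
      ∀ (X : Type v) (_ : Zero X) (A : GradedAct g X), A.IsUnital →
        ∀ α : Γ, Set.image2 A.act Set.univ (A.comp α) = Set.univ] := by
    tfae_have 1 → 2 := fun hg X _ A hA => A.image2_comp_eq_of_isStrong hg hlu hA
    tfae_have 2 → 3 := fun h X _ A hA => A.image2_univ_comp_eq_univ (h X _ A hA)
    tfae_have 3 → 1 := fun h =>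
      g.isStrong_of_univ_mul_comp (h S _ (GradedAct.regular g) (GradedAct.regular_isUnital g hlu))
    tfae_finish
  exact ⟨htfae.out 0 1, htfae.out 0 2⟩
end

section
/- Let X be a set with |X| ≥ 3. Then any group grading on the symmetric inverse monoid I(X) is trivial; that is, for any group Γ and any grading χ : I(X)∖{0} → Γ, one has χ(φ) = ε for every nonzero φ ∈ I(X). -/
/-!
The idempotents `single a a` have degree `1`, and restricting any `f` to a point `a` of its
domain gives `single a b = f ∘ single a a`, so `f` has the degree of any `single a b` with
`f a = b`. Given `a, b`, a third point `c` is fixed by the transposition `swap a b`, which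
therefore has both the degree of `single a b` and that of the idempotent `single c c`.
-/

namespace PEquiv

variable {α β : Type*}

theorem single_ne_bot [DecidableEq α] [DecidableEq β] (a : α) (b : β) : single a b ≠ ⊥ :=
  fun h => by simpa [h] using single_apply a b

theorem exists_mem_of_ne_bot {f : α ≃. β} (hf : f ≠ ⊥) : ∃ a b, b ∈ f a := by
  contrapose! hf
  ext a b
  exact iff_of_false (hf a b) (by simp)

/-- Gradings of `I(X)`, whose product is `f * g = g.trans f` and whose zero is `⊥`. -/
def IsGrading {X Γ : Type*} [Group Γ] (χ : (X ≃. X) → Γ) : Prop :=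
  ∀ f g : X ≃. X, g.trans f ≠ ⊥ → χ (g.trans f) = χ f * χ g

end PEquiv

open PEquiv

section Grading

variable {X Γ : Type*} [DecidableEq X] [Group Γ] {χ : (X ≃. X) → Γ}

theorem degree_single_self (hχ : IsGrading χ) (a : X) : χ (single a a) = 1 := by
  have h := hχ (single a a) (single a a)
  rw [single_trans_single] at h
  exact mul_eq_left.mp (h (single_ne_bot a a)).symm

theorem degree_single_of_mem {f : X ≃. X} {a b : X} (hχ : IsGrading χ) (h : b ∈ f a) :
    χ (single a b) = χ f := by
  have h' := hχ f (single a a)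
  rw [single_trans_of_mem a h] at h'
  rw [h' (single_ne_bot a b), degree_single_self hχ a, mul_one]

theorem degree_eq_one_of_mem_self {f : X ≃. X} {c : X} (hχ : IsGrading χ) (h : c ∈ f c) :
    χ f = 1 :=
  (degree_single_of_mem hχ h).symm.trans (degree_single_self hχ c)

theorem degree_single_eq_one {a b c : X} (hχ : IsGrading χ) (hca : c ≠ a) (hcb : c ≠ b) :
    χ (single a b) = 1 :=
  calc χ (single a b) = χ (Equiv.swap a b).toPEquiv :=
        degree_single_of_mem hχ (by simp [Equiv.toPEquiv_apply])
    _ = 1 := degree_eq_one_of_mem_self hχ (c := c) <| by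
        simp [Equiv.toPEquiv_apply, Equiv.swap_apply_of_ne_of_ne hca hcb]

end Grading

/-- Proposition `symminverseprop`: if `|X| ≥ 3`, then any group grading on the symmetric
inverse monoid `I(X)` (modelled as the partial bijections `X ≃. X`, with composition
`f * g = g.trans f`, i.e. apply `g` first, and zero element the empty partial map `⊥`)
is trivial: every nonzero element has degree `ε`. -/
theorem symmetric_inverse_monoid_grading_trivial {X : Type v}
    (hX : 3 ≤ Cardinal.mk X) {Γ : Type u} [Group Γ] (χ : (X ≃. X) → Γ)
    (hχ : ∀ f g : X ≃. X, g.trans f ≠ ⊥ → χ (g.trans f) = χ f * χ g) :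
    ∀ f : X ≃. X, f ≠ ⊥ → χ f = 1 := by
  classical
  intro f hf
  obtain ⟨a, b, hab⟩ := exists_mem_of_ne_bot hf
  obtain ⟨c, hca, hcb⟩ := Cardinal.exists_ne_ne_of_three_le hX a b
  rw [← degree_single_of_mem hχ hab]
  exact degree_single_eq_one hχ hca hcb
end

section
/- Let X be a nonempty Γ-graded set. Then: (1) I^gr(X) is a Γ-graded inverse semigroup; (2) I^gr(X) is strongly Γ-graded if and only if |X_α| = |X_β| for all α, β ∈ Γ; (3) I^gr(X) is locally strongly Γ-graded if and only if X_α ≠ ∅ for every α ∈ Γ. -/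
/-!
In `f h f = f` the middle `h` must send each `f x` back to `x`, and `h f h = h` gives the
converse, so `f.symm` is the only inner inverse of `f` in all of `I(X)`.

If `I(X)_{σ⁻¹} I(X)_σ = I(X)_ε`, the identity factors as `g ∘ h` with `h` of degree `σ`; then `h`
is total and injective, so it embeds `X_γ` into `X_{σγ}`. Conversely, if all components have the
same cardinality, gluing bijections `X_γ ≃ X_{βγ}` gives a permutation `E` of degree `β`, and every
`φ` of degree `αβ` factors as `(φ ∘ E⁻¹) ∘ E`.

For local strongness, a nonzero `φ` of degree `αβ` with `φ x = y` dominates the one-point map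
`x ↦ y`, which factors through any point of degree `β · deg x`. Conversely, factoring `x₀ ↦ x₀`
(degree `ε = a a⁻¹` with `a = deg x₀ · α⁻¹`) produces a point of degree `a⁻¹ · deg x₀ = α`.
-/

variable {Γ : Type u} [Group Γ] {X : Type v}

/-- Composition in the symmetric inverse monoid `I(X)` (partial bijections of `X`):
`imul f g = f ∘ g` (apply `g` first). -/
def imul (f g : X ≃. X) : X ≃. X := g.trans f

/-- For a `Γ`-graded set `X` (given by a partition map `degX : X → Γ`), the component
`I(X)_α = {φ ∈ I(X) | φ(Dom(φ)_β) ⊆ X_{αβ} for all β}` of the graded symmetric inverse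
monoid. -/
def IComp (degX : X → Γ) (α : Γ) : Set (X ≃. X) :=
  {f | ∀ x y : X, f x = some y → degX y = α * degX x}

/-- The graded symmetric inverse monoid `I^gr(X) = ⋃_α I(X)_α`. -/
def IGr (degX : X → Γ) : Set (X ≃. X) := {f | ∃ α : Γ, f ∈ IComp degX α}

open Cardinal Set

theorem PEquiv.exists_apply_eq_some_of_ne_bot {α β : Type*} {f : α ≃. β} (hf : f ≠ ⊥) :
    ∃ a b, f a = some b := by
  by_contra! h
  exact hf (PEquiv.ext fun a => Option.eq_none_iff_forall_ne_some.2 (h a))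

theorem PEquiv.single_ne_bot_s12 {α β : Type*} [DecidableEq α] [DecidableEq β] (a : α) (b : β) :
    PEquiv.single a b ≠ ⊥ := fun h => by
  simpa using congrArg (· a) h

theorem imul_apply (f g : X ≃. X) (x : X) : imul f g x = (g x).bind f := rfl

theorem imul_eq_some {f g : X ≃. X} {x y : X} :
    imul f g x = some y ↔ ∃ z, g x = some z ∧ f z = some y :=
  PEquiv.trans_eq_some g f x y

theorem imul_imul_symm_self (f : X ≃. X) : imul (imul f f.symm) f = f := by
  refine PEquiv.ext fun x => ?_
  rcases hx : f x with _ | y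
  · simp [imul_apply, hx]
  · simp [imul_apply, hx, f.eq_some_iff.2 hx]

theorem apply_eq_some_of_imul_imul_eq_self {f h : X ≃. X} (hfhf : imul (imul f h) f = f)
    {x y : X} (hxy : f x = some y) : h y = some x := by
  have hfhfx : imul (imul f h) f x = some y := by rw [hfhf, hxy]
  obtain ⟨y', hy', hhy'⟩ := imul_eq_some.1 hfhfx
  obtain ⟨z, hz, hzy⟩ := imul_eq_some.1 hhy'
  obtain rfl : y' = y := Option.some_injective _ (hy'.symm.trans hxy)
  obtain rfl : z = x := f.inj hzy hxy
  exact hz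

theorem eq_symm_of_imul_imul_eq_self {f h : X ≃. X} (hfhf : imul (imul f h) f = f)
    (hhfh : imul (imul h f) h = h) : h = f.symm :=
  PEquiv.ext fun y => Option.ext fun x => by
    rw [PEquiv.eq_some_iff]
    exact ⟨apply_eq_some_of_imul_imul_eq_self hhfh, apply_eq_some_of_imul_imul_eq_self hfhf⟩

section Graded

variable {degX : X → Γ}

theorem imul_mem_IComp {α β : Γ} {f g : X ≃. X} (hf : f ∈ IComp degX α)
    (hg : g ∈ IComp degX β) : imul f g ∈ IComp degX (α * β) := by
  intro x y hxy
  obtain ⟨z, hz, hzy⟩ := imul_eq_some.1 hxy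
  rw [hf z y hzy, hg x z hz, mul_assoc]

theorem symm_mem_IComp {α : Γ} {f : X ≃. X} (hf : f ∈ IComp degX α) :
    f.symm ∈ IComp degX α⁻¹ := fun x y hxy => by
  rw [hf y x (f.eq_some_iff.1 hxy), inv_mul_cancel_left]

theorem bot_mem_IComp (α : Γ) : (⊥ : X ≃. X) ∈ IComp degX α := fun x y hxy => by
  simp at hxy

theorem eq_bot_of_mem_IComp_of_mem_IComp {α β : Γ} {f : X ≃. X} (hαβ : α ≠ β)
    (hα : f ∈ IComp degX α) (hβ : f ∈ IComp degX β) : f = ⊥ := by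
  by_contra hf
  obtain ⟨x, y, hxy⟩ := PEquiv.exists_apply_eq_some_of_ne_bot hf
  exact hαβ (mul_right_cancel ((hα x y hxy).symm.trans (hβ x y hxy)))

theorem single_mem_IComp [DecidableEq X] {α : Γ} {a b : X} (h : degX b = α * degX a) :
    PEquiv.single a b ∈ IComp degX α := by
  intro x y hxy
  obtain ⟨rfl, rfl⟩ := (PEquiv.mem_single_iff x a y b).1 hxy
  exact h

theorem toPEquiv_mem_IComp {β : Γ} {E : X ≃ X} (hE : ∀ x, degX (E x) = β * degX x) :
    E.toPEquiv ∈ IComp degX β := by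
  intro x y hxy
  rw [Equiv.toPEquiv_apply, Option.some_inj] at hxy
  exact hxy ▸ hE x

theorem card_fiber_le_of_imul_eq_refl {σ : Γ} {g h : X ≃. X} (hh : h ∈ IComp degX σ)
    (hgh : imul g h = PEquiv.refl X) (γ : Γ) :
    #{x // degX x = γ} ≤ #{x // degX x = σ * γ} := by
  have h_total (x : X) : ∃ y, h x = some y := by
    have hx : imul g h x = some x := by rw [hgh]; rfl
    obtain ⟨y, hy, -⟩ := imul_eq_some.1 hx
    exact ⟨y, hy⟩
  choose H hH using h_total
  refine mk_le_of_injective (f := fun x => ⟨H x, by rw [hh _ _ (hH x), x.2]⟩) fun x₁ x₂ he => ?_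
  have hH₁ : h x₁ = some (H x₂) := (hH x₁).trans (congrArg (some ∘ Subtype.val) he)
  exact Subtype.ext (h.inj hH₁ (hH x₂))

theorem card_fiber_le_of_strongly_graded
    (hst : ∀ α β : Γ, image2 imul (IComp degX α) (IComp degX β) = IComp degX (α * β))
    (γ δ : Γ) : #{x // degX x = γ} ≤ #{x // degX x = δ} := by
  have hrefl : PEquiv.refl X ∈ IComp degX ((δ * γ⁻¹)⁻¹ * (δ * γ⁻¹)) := fun x y hxy => by
    rw [PEquiv.refl_apply, Option.some_inj] at hxy
    rw [hxy, inv_mul_cancel, one_mul]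
  rw [← hst] at hrefl
  obtain ⟨g, -, h, hh, hgh⟩ := hrefl
  simpa using card_fiber_le_of_imul_eq_refl hh hgh γ

theorem exists_equiv_degree_mul_left
    (hcard : ∀ α β : Γ, #{x // degX x = α} = #{x // degX x = β}) (β : Γ) :
    ∃ E : X ≃ X, ∀ x, degX (E x) = β * degX x := by
  have e (γ : Γ) : {x // degX x = γ} ≃ {x // degX x = β * γ} :=
    (Cardinal.eq.1 (hcard _ _)).some
  refine ⟨(Equiv.sigmaFiberEquiv degX).symm.trans <| (Equiv.sigmaCongrRight e).trans <|
    (Equiv.sigmaCongrLeft (β := fun γ => {x // degX x = γ}) (Equiv.mulLeft β)).trans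
      (Equiv.sigmaFiberEquiv degX), fun x => ?_⟩
  exact (e _ _).2

theorem image2_IComp_eq_of_equiv {α β : Γ} {E : X ≃ X}
    (hE : ∀ x, degX (E x) = β * degX x) :
    image2 imul (IComp degX α) (IComp degX β) = IComp degX (α * β) := by
  refine (image2_subset_iff.2 fun f hf g hg => imul_mem_IComp hf hg).antisymm fun f hf => ?_
  have hE' := toPEquiv_mem_IComp hE
  refine ⟨imul f E.toPEquiv.symm, by simpa using imul_mem_IComp hf (symm_mem_IComp hE'),
    E.toPEquiv, hE', ?_⟩
  show E.toPEquiv.trans (E.toPEquiv.symm.trans f) = f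
  rw [← PEquiv.trans_assoc, ← Equiv.toPEquiv_symm, ← Equiv.toPEquiv_trans,
    Equiv.self_trans_symm, Equiv.toPEquiv_refl, PEquiv.refl_trans]

theorem strongly_graded_iff_card_fiber_eq :
    (∀ α β : Γ, image2 imul (IComp degX α) (IComp degX β) = IComp degX (α * β)) ↔
      ∀ α β : Γ, #{x // degX x = α} = #{x // degX x = β} :=
  ⟨fun hst γ δ => (card_fiber_le_of_strongly_graded hst γ δ).antisymm
      (card_fiber_le_of_strongly_graded hst δ γ),
    fun hcard _ β => (exists_equiv_degree_mul_left hcard β).elim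
      fun _ hE => image2_IComp_eq_of_equiv hE⟩

theorem exists_degree_eq_of_locally_strongly_graded [Nonempty X]
    (hls : ∀ α β : Γ, ∀ f ∈ IComp degX (α * β), f ≠ ⊥ →
      ∃ t ∈ image2 imul (IComp degX α) (IComp degX β), t ≠ ⊥ ∧
        ∃ u : X ≃. X, imul u u = u ∧ t = imul f u)
    (α : Γ) : ∃ x, degX x = α := by
  classical
  obtain ⟨x₀⟩ := ‹Nonempty X›
  have hx₀ : PEquiv.single x₀ x₀ ∈ IComp degX (degX x₀ * α⁻¹ * (degX x₀ * α⁻¹)⁻¹) :=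
    single_mem_IComp (by rw [mul_inv_cancel, one_mul])
  obtain ⟨t, ⟨g, hg, h, -, rfl⟩, ht, u, -, htu⟩ :=
    hls _ _ _ hx₀ (PEquiv.single_ne_bot_s12 x₀ x₀)
  obtain ⟨x, y, hxy⟩ := PEquiv.exists_apply_eq_some_of_ne_bot ht
  obtain ⟨z, -, hzy⟩ := imul_eq_some.1 hxy
  have hy : y = x₀ := by
    rw [htu] at hxy
    obtain ⟨w, -, hw⟩ := imul_eq_some.1 hxy
    exact ((PEquiv.mem_single_iff _ _ _ _).1 hw).2
  refine ⟨z, ?_⟩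
  have hz := hg z y hzy
  rw [hy, mul_assoc, left_eq_mul, inv_mul_eq_one] at hz
  exact hz.symm

theorem exists_le_of_forall_exists_degree_eq [DecidableEq X]
    (hdeg : ∀ α : Γ, ∃ x, degX x = α) {α β : Γ} {f : X ≃. X} (hf : f ∈ IComp degX (α * β))
    (hne : f ≠ ⊥) :
    ∃ t ∈ image2 imul (IComp degX α) (IComp degX β), t ≠ ⊥ ∧
      ∃ u : X ≃. X, imul u u = u ∧ t = imul f u := by
  obtain ⟨x, y, hxy⟩ := PEquiv.exists_apply_eq_some_of_ne_bot hne
  obtain ⟨z, hz⟩ := hdeg (β * degX x)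
  have hzy : degX y = α * degX z := by rw [hf x y hxy, hz, mul_assoc]
  exact ⟨PEquiv.single x y,
    ⟨PEquiv.single z y, single_mem_IComp hzy, PEquiv.single x z, single_mem_IComp hz,
      PEquiv.single_trans_single x z y⟩,
    PEquiv.single_ne_bot_s12 x y, PEquiv.single x x, PEquiv.single_trans_single x x x,
    (PEquiv.single_trans_of_mem x hxy).symm⟩

end Graded

/-- Proposition `meme` about `I^gr(X)` for a nonempty `Γ`-graded set `X`:
(1) `I^gr(X)` is a `Γ`-graded inverse semigroup: the components multiply correctly
    (`I(X)_α I(X)_β ⊆ I(X)_{αβ}`), are closed under the inverse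
    (`(I(X)_α)⁻¹ ⊆ I(X)_{α⁻¹}`), all contain the zero `⊥`, and are otherwise disjoint;
    moreover `f.symm` is the (unique, within `I^gr(X)`) inner inverse of each
    `f ∈ I^gr(X)`;
(2) `I^gr(X)` is strongly `Γ`-graded iff `|X_α| = |X_β|` for all `α, β ∈ Γ`;
(3) `I^gr(X)` is locally strongly `Γ`-graded iff `X_α ≠ ∅` for all `α ∈ Γ`. -/
theorem Igr_graded_inverse_semigroup [Nonempty X] (degX : X → Γ) :
    ((∀ (α β : Γ) (f g : X ≃. X), f ∈ IComp degX α → g ∈ IComp degX β →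
        imul f g ∈ IComp degX (α * β)) ∧
     (∀ (α : Γ) (f : X ≃. X), f ∈ IComp degX α → f.symm ∈ IComp degX α⁻¹) ∧
     (∀ α : Γ, (⊥ : X ≃. X) ∈ IComp degX α) ∧
     (∀ (α β : Γ) (f : X ≃. X), α ≠ β → f ∈ IComp degX α → f ∈ IComp degX β → f = ⊥) ∧
     (∀ f ∈ IGr degX, imul (imul f f.symm) f = f ∧ imul (imul f.symm f) f.symm = f.symm) ∧
     (∀ f ∈ IGr degX, ∀ h ∈ IGr degX,
        imul (imul f h) f = f → imul (imul h f) h = h → h = f.symm)) ∧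
    ((∀ α β : Γ, Set.image2 imul (IComp degX α) (IComp degX β) = IComp degX (α * β)) ↔
      ∀ α β : Γ, Cardinal.mk {x : X // degX x = α} = Cardinal.mk {x : X // degX x = β}) ∧
    ((∀ α β : Γ, ∀ f ∈ IComp degX (α * β), f ≠ ⊥ →
        ∃ t ∈ Set.image2 imul (IComp degX α) (IComp degX β), t ≠ ⊥ ∧
          ∃ u : X ≃. X, imul u u = u ∧ t = imul f u) ↔
      ∀ α : Γ, ∃ x : X, degX x = α) := by
  classical
  exact ⟨⟨fun _ _ _ _ => imul_mem_IComp, fun _ _ => symm_mem_IComp, bot_mem_IComp,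
      fun _ _ _ => eq_bot_of_mem_IComp_of_mem_IComp,
      fun f _ => ⟨imul_imul_symm_self f, imul_imul_symm_self f.symm⟩,
      fun _ _ _ _ => eq_symm_of_imul_imul_eq_self⟩,
    strongly_graded_iff_card_fiber_eq,
    exists_degree_eq_of_locally_strongly_graded,
    fun hdeg _ _ _ hf hne => exists_le_of_forall_exists_degree_eq hdeg hf hne⟩
end

section
/- Let S be a Γ-graded inverse semigroup equipped with a non-degenerate partial action on a nonempty set X. If S is strongly Γ-graded, then the groupoid of germs S ⋉ X is strongly Γ-graded in the induced grading [s,x] ↦ deg(s). -/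
open Pointwise

/-- A partial action of a semigroup `S` on a set `X`: a zero-preserving semigroup
homomorphism `θ` into the symmetric inverse monoid `I(X)` of partial bijections of `X`
(with `θ(st) = θₛ ∘ θₜ`, i.e. `(θ t).trans (θ s)`, and the empty map `⊥` as zero). -/
structure PartialAction (S : Type v) [SemigroupWithZero S] (X : Type x) where
  θ : S → (X ≃. X)
  map_mul : ∀ s t : S, θ (s * t) = (θ t).trans (θ s)
  map_zero : θ 0 = ⊥

variable {S : Type v} [SemigroupWithZero S] {X : Type x}

/-- Pairs `(s, x)` with `x ∈ X_s = Dom(θ_s)`, representing germs. -/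
def GermBase (P : PartialAction S X) : Type max v x :=
  {p : S × X // (P.θ p.1 p.2).isSome}

/-- The germ equivalence: `(s, x) ∼ (t, y)` iff `x = y` and `se = te` for some
idempotent `e` with `x ∈ X_e`. -/
def GermRel (P : PartialAction S X) (p q : GermBase P) : Prop :=
  p.1.2 = q.1.2 ∧ ∃ e : S, e * e = e ∧ (P.θ e p.1.2).isSome ∧ p.1.1 * e = q.1.1 * e

/-- The set of morphisms of the groupoid of germs `S ⋉ X`. -/
def Germ (P : PartialAction S X) : Type max v x := Quot (GermRel P)

/-- The component `(S ⋉ X)_α` of the induced grading `[s,x] ↦ deg s` on the groupoid of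
germs. -/
def GermComp {Γ : Type u} [Group Γ] (g : Grading Γ S) (P : PartialAction S X) (α : Γ) :
    Set (Germ P) :=
  {m | ∃ p : GermBase P, g.deg p.1.1 = α ∧ m = Quot.mk (GermRel P) p}

/-- The set `(S ⋉ X)_α (S ⋉ X)_β` of composable products of germs of degrees `α` and
`β`: `[s,x][t,y] = [st,y]` is defined when `d([s,x]) = x` equals `r([t,y]) = θ_t(y)`. -/
def GermProd {Γ : Type u} [Group Γ] (g : Grading Γ S) (P : PartialAction S X) (α β : Γ) :
    Set (Germ P) :=
  {m | ∃ (p q : GermBase P) (h : (P.θ (p.1.1 * q.1.1) q.1.2).isSome),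
      g.deg p.1.1 = α ∧ g.deg q.1.1 = β ∧ P.θ q.1.1 q.1.2 = some p.1.2 ∧
      m = Quot.mk (GermRel P) ⟨(p.1.1 * q.1.1, q.1.2), h⟩}

/-!
A composable product `[s, x][t, y] = [st, y]` has `st ≠ 0` because `y ∈ X_{st}`, so its degree
is `deg s * deg t`. Conversely, strong grading of `S` factors every nonzero `u` of degree `αβ`
as `u = st` with `deg s = α` and `deg t = β`, and then for `y ∈ X_u` the germ `[u, y]` is the
composable product `[s, θ_t y][t, y]`.
-/

namespace PartialAction

variable (P : PartialAction S X)

theorem ne_zero_of_isSome {s : S} {x : X} (h : (P.θ s x).isSome) : s ≠ 0 := by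
  rintro rfl
  simp [P.map_zero] at h

theorem exists_of_isSome_mul {s t : S} {x : X} (h : (P.θ (s * t) x).isSome) :
    ∃ y, P.θ t x = some y ∧ (P.θ s y).isSome := by
  obtain ⟨z, hz⟩ := Option.isSome_iff_exists.mp h
  obtain ⟨y, hy, hsy⟩ := (PEquiv.trans_eq_some _ _ _ _).mp (P.map_mul s t ▸ hz)
  exact ⟨y, hy, by simp [hsy]⟩

end PartialAction

namespace Grading

variable {Γ : Type*} [Group Γ] (g : Grading Γ S)

theorem exists_mul_eq_of_isStrong (hstr : g.IsStrong) {α β : Γ} {u : S} (hu : u ≠ 0)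
    (hdeg : g.deg u = α * β) : ∃ s t, g.deg s = α ∧ g.deg t = β ∧ s * t = u := by
  have hmem : u ∈ g.comp α * g.comp β := hstr α β ▸ Or.inr hdeg
  obtain ⟨s, hs, t, ht, rfl⟩ := hmem
  have hs0 : s ≠ 0 := by rintro rfl; simp at hu
  have ht0 : t ≠ 0 := by rintro rfl; simp at hu
  exact ⟨s, t, hs.resolve_left hs0, ht.resolve_left ht0, rfl⟩

end Grading

section GermGrading

variable {Γ : Type u} [Group Γ] (g : Grading Γ S) (P : PartialAction S X)

theorem germProd_subset_germComp (α β : Γ) : GermProd g P α β ⊆ GermComp g P (α * β) := by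
  rintro _ ⟨p, q, h, hα, hβ, -, rfl⟩
  refine ⟨⟨(p.1.1 * q.1.1, q.1.2), h⟩, ?_, rfl⟩
  rw [g.deg_mul _ _ (P.ne_zero_of_isSome h), hα, hβ]

theorem germComp_subset_germProd (hstr : g.IsStrong) (α β : Γ) :
    GermComp g P (α * β) ⊆ GermProd g P α β := by
  rintro _ ⟨⟨⟨u, x⟩, hux⟩, hdeg, rfl⟩
  obtain ⟨s, t, hs, ht, rfl⟩ :=
    g.exists_mul_eq_of_isStrong hstr (P.ne_zero_of_isSome hux) hdeg
  obtain ⟨y, hy, hsy⟩ := P.exists_of_isSome_mul hux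
  exact ⟨⟨(s, y), hsy⟩, ⟨(t, x), by rw [hy]; rfl⟩, hux, hs, ht, hy, rfl⟩

end GermGrading

theorem germ_groupoid_strongly_graded_general {Γ : Type u} [Group Γ] {S : Type v}
    [SemigroupWithZero S] {X : Type x} (g : Grading Γ S)
    (P : PartialAction S X)
    (hstr : g.IsStrong) :
    ∀ α β : Γ, GermProd g P α β = GermComp g P (α * β) := fun α β =>
  (germProd_subset_germComp g P α β).antisymm (germComp_subset_germProd g P hstr α β)

/-- Proposition `sthfyhry`: if a `Γ`-graded inverse semigroup `S` acting
non-degenerately and partially on a nonempty set `X` is strongly graded, then the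
groupoid of germs `S ⋉ X` is strongly graded in the induced grading, i.e.
`(S⋉X)_α (S⋉X)_β = (S⋉X)_{αβ}` for all `α, β ∈ Γ`. -/
theorem germ_groupoid_strongly_graded {Γ : Type u} [Group Γ] {S : Type v}
    [SemigroupWithZero S] {X : Type x} [Nonempty X] (g : Grading Γ S)
    (hinv : ∀ s : S, ∃! t : S, s * t * s = s ∧ t * s * t = t)
    (P : PartialAction S X)
    (hnd : ∀ x : X, ∃ e : S, e * e = e ∧ (P.θ e x).isSome)
    (hstr : g.IsStrong) :
    ∀ α β : Γ, GermProd g P α β = GermComp g P (α * β) :=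
  germ_groupoid_strongly_graded_general g P hstr
end

section
/- Let S be a Γ-graded semigroup and A a unital ring, and view the contracted semigroup ring A[S] as a Γ-graded ring via the grading induced by that on S. Then: (1) S is a strongly Γ-graded semigroup if and only if A[S] is a strongly Γ-graded ring; (2) there is a natural ring isomorphism A[S#Γ] ≅ A[S]#Γ, sending Σ a^{(sP_α)}(sP_α) to Σ_α (Σ_s a^{(sP_α)} s) P_α. -/
open Pointwise

/-- The underlying set of the smash product `S#Γ`. -/
abbrev Smash (Γ : Type u) (S : Type v) [SemigroupWithZero S] : Type max u v :=
  Option ({ s : S // s ≠ 0 } × Γ)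

open Classical in
/-- Multiplication in the smash product semigroup `S#Γ`. -/
noncomputable def smashMul {Γ : Type u} [Group Γ] {S : Type v} [SemigroupWithZero S]
    (g : Grading Γ S) (a b : Smash Γ S) : Smash Γ S :=
  a.bind fun p => b.bind fun q =>
    if h : p.1.1 * q.1.1 ≠ 0 ∧ g.deg q.1.1 = p.2 * q.2⁻¹ then
      some (⟨p.1.1 * q.1.1, h.1⟩, q.2)
    else none

open Classical in
/-- Multiplication of the contracted semigroup ring `A[T]` of a "semigroup with zero"
given by a carrier `T`, a zero element `z : T`, and a multiplication `m`; the ring is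
modelled as the finitely supported functions on `T \ {z}`. -/
noncomputable def cmul {A : Type u'} [Ring A] {T : Type v'} (z : T) (m : T → T → T)
    (x y : {t : T // t ≠ z} →₀ A) : {t : T // t ≠ z} →₀ A :=
  x.sum fun s a => y.sum fun t b =>
    if h : m s.1 t.1 ≠ z then Finsupp.single ⟨m s.1 t.1, h⟩ (a * b) else 0

/-- The homogeneous component `A[S]_α = A[S_α]` of the contracted semigroup ring. -/
def ringComp {Γ : Type u} [Group Γ] {S : Type v} [SemigroupWithZero S]
    (g : Grading Γ S) (A : Type u') [Ring A] (α : Γ) :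
    Set ({s : S // s ≠ (0 : S)} →₀ A) :=
  {x | ∀ s : {s : S // s ≠ (0 : S)}, x s ≠ 0 → g.deg s.1 = α}

open Classical in
/-- The natural map `A[S#Γ] → A[S]#Γ`,
`Σ a^{(sP_α)} (sP_α) ↦ Σ_α (Σ_s a^{(sP_α)} s) P_α`, where `A[S]#Γ` is modelled as the
finitely supported functions `Γ →₀ A[S]`. -/
noncomputable def smashToFun {Γ : Type u} [Group Γ] {S : Type v} [SemigroupWithZero S]
    (A : Type u') [Ring A] (x : {t : Smash Γ S // t ≠ none} →₀ A) :
    Γ →₀ ({s : S // s ≠ (0 : S)} →₀ A) :=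
  x.sum fun p a =>
    match p with
    | ⟨some q, _⟩ => Finsupp.single q.2 (Finsupp.single q.1 a)
    | ⟨none, h⟩ => absurd rfl h

open Classical in
/-- Multiplication in the ring smash product `A[S]#Γ`:
`(a P_α)(b P_β) = (a ⬝ b_{αβ⁻¹}) P_β`, where `b_{αβ⁻¹}` is the degree-`αβ⁻¹`
homogeneous component of `b`. -/
noncomputable def smashRingMul {Γ : Type u} [Group Γ] {S : Type v} [SemigroupWithZero S]
    (g : Grading Γ S) (A : Type u') [Ring A]
    (F G : Γ →₀ ({s : S // s ≠ (0 : S)} →₀ A)) :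
    Γ →₀ ({s : S // s ≠ (0 : S)} →₀ A) :=
  F.sum fun α a => G.sum fun β b =>
    Finsupp.single β (cmul (0 : S) (· * ·) a (b.filter fun s => g.deg s.1 = α * β⁻¹))

/-!
In `A[S]` the component `A[S]_α` is the free `A`-module on `S_α ∖ {0}`, and a product of two
basis elements is again a basis element or zero. Hence the additive span of
`A[S]_α A[S]_β` is the free module on `S_α S_β ∖ {0}`, which is all of `A[S]_{αβ}` exactly when
`S_α S_β = S_{αβ}` (detected on the elements `1 ⬝ s`, which needs `1 ≠ 0`).

Both `A[S#Γ]` and `A[S]#Γ` are free `A`-modules on the pairs `(s, α)` with `s ≠ 0`, and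
`smashToFun` matches the two bases. Both products are biadditive, so multiplicativity reduces
to basis elements: `(sP_α)(tP_β)` is `(st)P_β` in `A[S#Γ]` and `(s t_{αβ⁻¹})P_β` in `A[S]#Γ`,
and both are nonzero exactly when `st ≠ 0` and `deg t = αβ⁻¹`.
-/

namespace Finsupp

variable {α β M N P : Type*} [AddZeroClass M] [AddZeroClass N] [AddCommMonoid P]
  {h : α → M → β → N → P}

theorem sum_sum_add_left (h_zero : ∀ a b n, h a 0 b n = 0)
    (h_add : ∀ a m m' b n, h a (m + m') b n = h a m b n + h a m' b n)
    (x x' : α →₀ M) (y : β →₀ N) :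
    (x + x').sum (fun a m => y.sum (h a m)) =
      x.sum (fun a m => y.sum (h a m)) + x'.sum (fun a m => y.sum (h a m)) :=
  sum_add_index' (fun _ => by simp only [Finsupp.sum, h_zero, Finset.sum_const_zero])
    fun _ _ _ => by simp only [Finsupp.sum, h_add, Finset.sum_add_distrib]

theorem sum_sum_add_right (h_zero : ∀ a m b, h a m b 0 = 0)
    (h_add : ∀ a m b n n', h a m b (n + n') = h a m b n + h a m b n')
    (x : α →₀ M) (y y' : β →₀ N) :
    x.sum (fun a m => (y + y').sum (h a m)) =
      x.sum (fun a m => y.sum (h a m)) + x.sum (fun a m => y'.sum (h a m)) := by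
  simp only [sum_add_index' (h_zero _ _) (h_add _ _), sum_add]

theorem sum_single_sum_single (h_zero_left : ∀ a b n, h a 0 b n = 0)
    (h_zero_right : ∀ a m b, h a m b 0 = 0) (a : α) (m : M) (b : β) (n : N) :
    (single a m).sum (fun a m => (single b n).sum (h a m)) = h a m b n := by
  rw [sum_single_index (by simp only [Finsupp.sum, h_zero_left, Finset.sum_const_zero]),
    sum_single_index (h_zero_right a m b)]

end Finsupp

open Finsupp

section ContractedRing

open Classical

variable {A T : Type*} [Ring A] (z : T) (m : T → T → T)

lemma cmul_zero_left (y : {t : T // t ≠ z} →₀ A) : cmul z m 0 y = 0 :=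
  sum_zero_index

lemma cmul_zero_right (x : {t : T // t ≠ z} →₀ A) : cmul z m x 0 = 0 := by
  simp [cmul]

lemma cmul_add_left (x x' y : {t : T // t ≠ z} →₀ A) :
    cmul z m (x + x') y = cmul z m x y + cmul z m x' y :=
  sum_sum_add_left (fun _ _ _ => by simp) (fun _ _ _ _ _ => by split <;> simp [add_mul]) _ _ _

lemma cmul_add_right (x y y' : {t : T // t ≠ z} →₀ A) :
    cmul z m x (y + y') = cmul z m x y + cmul z m x y' :=
  sum_sum_add_right (fun _ _ _ => by simp) (fun _ _ _ _ _ => by split <;> simp [mul_add]) _ _ _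

lemma cmul_single_single (s t : {t : T // t ≠ z}) (a b : A) :
    cmul z m (single s a) (single t b) =
      if h : m s.1 t.1 ≠ z then single ⟨m s.1 t.1, h⟩ (a * b) else 0 :=
  sum_single_sum_single (fun _ _ _ => by simp) (fun _ _ _ => by simp) _ _ _ _

lemma cmul_mem_supported {P Q : Set {t : T // t ≠ z}} {x y : {t : T // t ≠ z} →₀ A}
    (hx : x ∈ supported A A P) (hy : y ∈ supported A A Q) :
    cmul z m x y ∈ supported A A {t | ∃ u ∈ P, ∃ v ∈ Q, t.1 = m u.1 v.1} := by
  refine Submodule.sum_mem _ fun u hu => Submodule.sum_mem _ fun v hv => ?_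
  dsimp only
  split
  · exact single_mem_supported A _ ⟨u, hx hu, v, hy hv, rfl⟩
  · exact zero_mem _

end ContractedRing

namespace Grading

variable {Γ S : Type*} [Group Γ] [SemigroupWithZero S] (g : Grading Γ S)

lemma zero_mem_comp (α : Γ) : (0 : S) ∈ g.comp α := Or.inl rfl

lemma comp_mul_comp_subset (α β : Γ) : g.comp α * g.comp β ⊆ g.comp (α * β) := by
  rintro _ ⟨u, hu, v, hv, rfl⟩
  by_cases huv : u * v = 0
  · exact Or.inl huv
  · right
    rw [g.deg_mul u v huv, hu.resolve_left (left_ne_zero_of_mul huv),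
      hv.resolve_left (right_ne_zero_of_mul huv)]

lemma isStrong_iff_comp_mul_subset :
    g.IsStrong ↔ ∀ α β, g.comp (α * β) ⊆ g.comp α * g.comp β :=
  forall₂_congr fun α β => ⟨Eq.superset, (g.comp_mul_comp_subset α β).antisymm⟩

variable {A : Type*} [Ring A]

lemma ringComp_eq_supported (γ : Γ) :
    ringComp g A γ = supported A A {s : {s : S // s ≠ 0} | g.deg s.1 = γ} := by
  ext x
  simp only [ringComp, SetLike.mem_coe, mem_supported, Set.subset_def,
    mem_support_iff, Set.mem_ofPred_eq]

lemma single_mem_ringComp {γ : Γ} {s : {s : S // s ≠ 0}} (hs : g.deg s.1 = γ) (c : A) :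
    single s c ∈ ringComp g A γ := by
  rw [ringComp_eq_supported]
  exact single_mem_supported A c hs

noncomputable abbrev ringCompMul (A : Type*) [Ring A] (α β : Γ) :
    AddSubmonoid ({s : S // s ≠ 0} →₀ A) :=
  AddSubmonoid.closure (Set.image2 (cmul (0 : S) (· * ·)) (ringComp g A α) (ringComp g A β))

lemma ringCompMul_le (α β : Γ) :
    ringCompMul g A α β ≤
      (supported A A {t | ∃ u ∈ {s : {s : S // s ≠ 0} | g.deg s.1 = α},
        ∃ v ∈ {s : {s : S // s ≠ 0} | g.deg s.1 = β}, t.1 = u.1 * v.1}).toAddSubmonoid := by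
  refine AddSubmonoid.closure_le.2 ?_
  rintro _ ⟨x, hx, y, hy, rfl⟩
  rw [ringComp_eq_supported] at hx hy
  exact cmul_mem_supported _ _ hx hy

lemma ringCompMul_subset (α β : Γ) :
    (ringCompMul g A α β : Set ({s : S // s ≠ 0} →₀ A)) ⊆ ringComp g A (α * β) := by
  intro x hx
  rw [ringComp_eq_supported]
  refine supported_mono ?_ (g.ringCompMul_le α β hx)
  rintro t ⟨u, hu, v, hv, htuv⟩
  simp only [Set.mem_ofPred_eq] at hu hv ⊢
  rw [htuv, g.deg_mul _ _ (htuv ▸ t.2), hu, hv]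

lemma mem_comp_mul_of_single_mem_ringCompMul [Nontrivial A] {α β : Γ} {s : {s : S // s ≠ 0}}
    (hs : single s (1 : A) ∈ ringCompMul g A α β) :
    s.1 ∈ g.comp α * g.comp β := by
  obtain ⟨u, hu, v, hv, hsuv⟩ :=
    (mem_supported A _).1 (g.ringCompMul_le α β hs)
      (show s ∈ ((single s (1 : A)).support : Set _) by simp)
  exact hsuv ▸ Set.mul_mem_mul (Or.inr hu) (Or.inr hv)

lemma single_mem_ringCompMul_of_mem_comp_mul {α β : Γ} {s : {s : S // s ≠ 0}}
    (hs : s.1 ∈ g.comp α * g.comp β) (c : A) :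
    single s c ∈ ringCompMul g A α β := by
  obtain ⟨u, hu, v, hv, huv : u * v = s.1⟩ := hs
  have huv0 : u * v ≠ 0 := huv ▸ s.2
  have hu0 : u ≠ 0 := left_ne_zero_of_mul huv0
  have hv0 : v ≠ 0 := right_ne_zero_of_mul huv0
  refine AddSubmonoid.subset_closure
    ⟨single ⟨u, hu0⟩ 1, single_mem_ringComp g (hu.resolve_left hu0) 1,
      single ⟨v, hv0⟩ c, single_mem_ringComp g (hv.resolve_left hv0) c, ?_⟩
  rw [cmul_single_single, dif_pos huv0, one_mul]
  exact congrArg (single · c) (Subtype.ext huv)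

lemma ringComp_subset_ringCompMul_iff [Nontrivial A] (α β : Γ) :
    ringComp g A (α * β) ⊆ ringCompMul g A α β ↔
    g.comp (α * β) ⊆ g.comp α * g.comp β := by
  constructor
  · intro h s hs
    by_cases hs0 : s = 0
    · exact hs0 ▸ ⟨0, g.zero_mem_comp α, 0, g.zero_mem_comp β, zero_mul 0⟩
    · exact g.mem_comp_mul_of_single_mem_ringCompMul (s := ⟨s, hs0⟩)
        (h (g.single_mem_ringComp (hs.resolve_left hs0) 1))
  · intro h x hx
    rw [← x.sum_single]
    exact sum_mem fun s hs => g.single_mem_ringCompMul_of_mem_comp_mul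
      (h (Or.inr (hx s (mem_support_iff.1 hs)))) (x s)

end Grading

section Smash

open Classical

variable {Γ S : Type*} [SemigroupWithZero S] (A : Type*) [Ring A]

noncomputable def smashAddEquiv :
    ({t : Smash Γ S // t ≠ none} →₀ A) ≃+ (Γ →₀ {s : S // s ≠ 0} →₀ A) :=
  (Finsupp.domCongr ((Equiv.subtypeEquivRight fun _ => Option.ne_none_iff_isSome).trans
    ((Equiv.optionIsSomeEquiv _).trans (Equiv.prodComm _ _)))).trans curryAddEquiv

lemma smashAddEquiv_single (q : {s : S // s ≠ 0} × Γ) (h : (some q : Smash Γ S) ≠ none)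
    (a : A) : smashAddEquiv A (single ⟨some q, h⟩ a) = single q.2 (single q.1 a) := by
  simp [smashAddEquiv, curryAddEquiv, Equiv.optionIsSomeEquiv]

variable [Group Γ]

lemma smashToFun_eq_smashAddEquiv : smashToFun (Γ := Γ) (S := S) A = smashAddEquiv A := by
  ext x : 1
  conv_rhs => rw [← x.sum_single]
  rw [map_finsuppSum]
  refine sum_congr fun ⟨t, ht⟩ _ => ?_
  obtain ⟨q, rfl⟩ := Option.ne_none_iff_exists'.1 ht
  exact (smashAddEquiv_single A q ht _).symm

variable (g : Grading Γ S)

lemma smashRingMul_zero_left (G : Γ →₀ {s : S // s ≠ 0} →₀ A) : smashRingMul g A 0 G = 0 :=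
  sum_zero_index

lemma smashRingMul_zero_right (F : Γ →₀ {s : S // s ≠ 0} →₀ A) : smashRingMul g A F 0 = 0 := by
  simp [smashRingMul]

lemma smashRingMul_add_left (F F' G : Γ →₀ {s : S // s ≠ 0} →₀ A) :
    smashRingMul g A (F + F') G = smashRingMul g A F G + smashRingMul g A F' G :=
  sum_sum_add_left (fun _ _ _ => by rw [cmul_zero_left, single_zero])
    (fun _ _ _ _ _ => by rw [cmul_add_left, single_add]) _ _ _

lemma smashRingMul_add_right (F G G' : Γ →₀ {s : S // s ≠ 0} →₀ A) :
    smashRingMul g A F (G + G') = smashRingMul g A F G + smashRingMul g A F G' :=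
  sum_sum_add_right (fun _ _ _ => by rw [filter_zero, cmul_zero_right, single_zero])
    (fun _ _ _ _ _ => by rw [filter_add, cmul_add_right, single_add]) _ _ _

lemma smashRingMul_single_single (α β : Γ) (a b : {s : S // s ≠ 0} →₀ A) :
    smashRingMul g A (single α a) (single β b) =
      single β (cmul (0 : S) (· * ·) a (b.filter fun s => g.deg s.1 = α * β⁻¹)) :=
  sum_single_sum_single (fun _ _ _ => by rw [cmul_zero_left, single_zero])
    (fun _ _ _ => by rw [filter_zero, cmul_zero_right, single_zero]) _ _ _ _

lemma smashAddEquiv_cmul_single_single (p q : {s : S // s ≠ 0} × Γ)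
    (hp : (some p : Smash Γ S) ≠ none) (hq : (some q : Smash Γ S) ≠ none) (a b : A) :
    smashAddEquiv A (cmul none (smashMul g) (single ⟨some p, hp⟩ a) (single ⟨some q, hq⟩ b)) =
      smashRingMul g A (smashAddEquiv A (single ⟨some p, hp⟩ a))
        (smashAddEquiv A (single ⟨some q, hq⟩ b)) := by
  rw [smashAddEquiv_single, smashAddEquiv_single, smashRingMul_single_single,
    cmul_single_single]
  by_cases hdeg : g.deg q.1.1 = p.2 * q.2⁻¹
  · rw [filter_single_of_pos (fun s : {s : S // s ≠ 0} => g.deg s.1 = p.2 * q.2⁻¹) hdeg,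
      cmul_single_single]
    by_cases hpq : p.1.1 * q.1.1 = 0
    · simp [smashMul, hpq]
    · simp [smashMul, hpq, hdeg, smashAddEquiv_single, -single_mul]
  · rw [filter_single_of_neg (fun s : {s : S // s ≠ 0} => g.deg s.1 = p.2 * q.2⁻¹) hdeg,
      cmul_zero_right]
    simp [smashMul, hdeg]

lemma smashAddEquiv_cmul (x y : {t : Smash Γ S // t ≠ none} →₀ A) :
    smashAddEquiv A (cmul none (smashMul g) x y) =
      smashRingMul g A (smashAddEquiv A x) (smashAddEquiv A y) := by
  induction x using Finsupp.induction_linear with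
  | zero => rw [cmul_zero_left, map_zero, smashRingMul_zero_left]
  | add x x' hx hx' => rw [cmul_add_left, map_add, map_add, smashRingMul_add_left, hx, hx']
  | single p a =>
    induction y using Finsupp.induction_linear with
    | zero => rw [cmul_zero_right, map_zero, smashRingMul_zero_right]
    | add y y' hy hy' =>
      rw [cmul_add_right, map_add, map_add, smashRingMul_add_right, hy, hy']
    | single q b =>
      obtain ⟨_ | p, hp⟩ := p
      · exact absurd rfl hp
      obtain ⟨_ | q, hq⟩ := q
      · exact absurd rfl hq
      exact smashAddEquiv_cmul_single_single A g p q hp hq a b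

end Smash

/-- Proposition `hfhffhghggh`: for a `Γ`-graded semigroup `S` and a unital ring `A`,
with the contracted semigroup ring `A[S]` carrying the induced grading:
(1) `S` is strongly graded iff `A[S]` is a strongly graded ring (i.e. the additive
    closure of `A[S]_α ⬝ A[S]_β` is all of `A[S]_{αβ}`);
(2) there is a natural ring isomorphism `A[S#Γ] ≅ A[S]#Γ`, given by the explicit
    additive, multiplicative bijection `smashToFun`. -/
theorem contracted_semigroup_ring_graded {Γ : Type u} [Group Γ] {S : Type v}
    [SemigroupWithZero S] (g : Grading Γ S) (A : Type u') [Ring A] [Nontrivial A] :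
    (g.IsStrong ↔
      ∀ α β : Γ,
        (AddSubmonoid.closure
            (Set.image2 (cmul (0 : S) (· * ·)) (ringComp g A α) (ringComp g A β)) :
          Set ({s : S // s ≠ (0 : S)} →₀ A)) = ringComp g A (α * β)) ∧
    (Function.Bijective (smashToFun (Γ := Γ) (S := S) A) ∧
     (∀ x y : {t : Smash Γ S // t ≠ none} →₀ A,
        smashToFun A (x + y) = smashToFun A x + smashToFun A y) ∧
     (∀ x y : {t : Smash Γ S // t ≠ none} →₀ A,
        smashToFun A (cmul (none : Smash Γ S) (smashMul g) x y) =
          smashRingMul g A (smashToFun A x) (smashToFun A y))) := by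
  refine ⟨?_, ?_⟩
  · rw [g.isStrong_iff_comp_mul_subset]
    refine forall₂_congr fun α β => ?_
    rw [Set.Subset.antisymm_iff, and_iff_right (g.ringCompMul_subset α β),
      g.ringComp_subset_ringCompMul_iff]
  · rw [smashToFun_eq_smashAddEquiv]
    exact ⟨(smashAddEquiv A).bijective, map_add _, smashAddEquiv_cmul A g⟩
end

section
/- Let E be a directed graph. Then the graph inverse semigroup S(E) is strongly graded in the natural ℤ-grading if and only if E is the empty graph. -/
/-! Graph inverse semigroups, modelled concretely: a graph is given by `src rng : E → V`;
a nonzero element of `S(E)` is (uniquely) `x y⁻¹` for paths `x, y` with `r(x) = r(y)`,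
recorded as a pair of pairs (starting vertex, edge list); the zero element is `none`.
The set of (valid representations of) elements of `S(E)` is carved out by `ValidGIS`. -/

variable {V : Type u} {E : Type u}

/-- `goodFrom src rng v l`: the edge list `l` forms a path starting at the vertex `v`. -/
def goodFrom (src rng : E → V) : V → List E → Prop
  | _, [] => True
  | v, e :: l => src e = v ∧ goodFrom src rng (rng e) l

/-- The end (range) vertex of the path starting at `v` with edge list `l`. -/
def pend (rng : E → V) : V → List E → V
  | v, [] => v
  | _, e :: l => pend rng (rng e) l

/-- Raw carrier for the graph inverse semigroup `S(E)`: `some ((a, xs), (b, ys))`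
represents `x y⁻¹` where `x` is the path `(a, xs)` and `y` is the path `(b, ys)`;
`none` is the zero. -/
abbrev RawGIS (V E : Type u) : Type u := Option ((V × List E) × (V × List E))

/-- Validity of a raw element: both components are paths and they have the same range. -/
def ValidGIS (src rng : E → V) : RawGIS V E → Prop
  | none => True
  | some (x, y) =>
      goodFrom src rng x.1 x.2 ∧ goodFrom src rng y.1 y.2 ∧
        pend rng x.1 x.2 = pend rng y.1 y.2

open Classical in
/-- Multiplication in `S(E)`:
`(x y⁻¹)(u w⁻¹) = (xz) w⁻¹` if `u = yz`, `x (wz)⁻¹` if `y = uz`, and `0` otherwise. -/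
noncomputable def gmul : RawGIS V E → RawGIS V E → RawGIS V E
  | some (x, y), some (u, w) =>
      if y.1 = u.1 ∧ y.2 <+: u.2 then
        some ((x.1, x.2 ++ u.2.drop y.2.length), w)
      else if u.1 = y.1 ∧ u.2 <+: y.2 then
        some (x, (w.1, w.2 ++ y.2.drop u.2.length))
      else none
  | _, _ => none

/-- The natural `ℤ`-degree: `deg (x y⁻¹) = |x| - |y|`. -/
def degZ : RawGIS V E → ℤ
  | some (x, y) => (x.2.length : ℤ) - (y.2.length : ℤ)
  | none => 0

/-- The component `S(E)_n` of the natural `ℤ`-grading of `S(E)` (as a subset of the raw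
carrier, consisting of the zero together with the valid elements of degree `n`). -/
def compZ (src rng : E → V) (n : ℤ) : Set (RawGIS V E) :=
  {a | a = none ∨ (ValidGIS src rng a ∧ degZ a = n)}

/-!
In `S(E)` the left factor's path `x` is a prefix of the left path of any nonzero product
`(x y⁻¹) b`. An element of positive degree has `|x| ≥ 1`, so no product in
`S(E)_1 S(E)_{-1}` is a vertex `v = v v⁻¹ ∈ S(E)_0`; hence strong grading forces `E⁰ = ∅`.
Conversely, if there are no vertices then `S(E) = {0}` and every component is `{0}`.
-/

namespace RawGIS

theorem eq_none_of_isEmpty [IsEmpty V] (a : RawGIS V E) : a = none := by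
  rcases a with _ | ⟨⟨⟨v, _⟩, _⟩⟩
  · rfl
  · exact isEmptyElim v

theorem gmul_none_left (b : RawGIS V E) : gmul none b = none := by
  cases b <;> rfl

theorem prefix_of_gmul_eq_some {x y x' w' : V × List E} {b : RawGIS V E}
    (h : gmul (some (x, y)) b = some (x', w')) : x.2 <+: x'.2 := by
  rcases b with _ | ⟨u, w⟩
  · cases h
  · simp only [gmul] at h
    split_ifs at h
    · cases h
      exact List.prefix_append _ _
    · cases h
      exact List.prefix_refl _

end RawGIS

section Grading

variable (src rng : E → V)

theorem vertex_mem_compZ_zero (v : V) :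
    (some ((v, []), (v, [])) : RawGIS V E) ∈ compZ src rng 0 :=
  Or.inr ⟨⟨trivial, trivial, rfl⟩, rfl⟩

theorem vertex_notMem_image2_gmul_compZ_of_pos (v : V) {m : ℤ} (hm : 0 < m) (n : ℤ) :
    (some ((v, []), (v, [])) : RawGIS V E) ∉
      Set.image2 gmul (compZ src rng m) (compZ src rng n) := by
  rintro ⟨_ | ⟨x, y⟩, ha, b, -, hab⟩
  · simp [RawGIS.gmul_none_left] at hab
  · have hx : x.2 ≠ [] := by
      rintro hx
      rcases ha with ha | ⟨-, hdeg⟩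
      · cases ha
      · simp only [degZ, hx, List.length_nil] at hdeg
        omega
    exact hx (List.prefix_nil.mp (RawGIS.prefix_of_gmul_eq_some hab))

theorem compZ_eq_singleton_none [IsEmpty V] (n : ℤ) : compZ src rng n = {none} :=
  Set.eq_singleton_iff_unique_mem.mpr ⟨Or.inl rfl, fun a _ => RawGIS.eq_none_of_isEmpty a⟩

end Grading

/-- Corollary `usual-grading`: the graph inverse semigroup `S(E)` is strongly graded in
the natural `ℤ`-grading if and only if the graph `E` is empty. -/
theorem gis_strongly_naturally_graded_iff_empty {V E : Type u} (src rng : E → V) :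
    (∀ m n : ℤ,
        Set.image2 gmul (compZ src rng m) (compZ src rng n) = compZ src rng (m + n)) ↔
      IsEmpty V := by
  constructor
  · intro hgraded
    refine ⟨fun v => vertex_notMem_image2_gmul_compZ_of_pos src rng v one_pos (-1) ?_⟩
    rw [hgraded]
    exact vertex_mem_compZ_zero src rng v
  · intro _ m n
    simp only [compZ_eq_singleton_none, Set.image2_singleton]
    rfl
end
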